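/- Let r > 0 and let (M,d,p) be a complete pointed ℝ-tree of radius ≤ r that satisfies the branching condition for radius r. Let a ∈ M and let h ∈ ℝ satisfy 0 < h < r − d(p,a). Then for every ε > 0 there exists b ∈ M with d(a,b) < ε such that M ∖ {b} has at least 3 connected components each of height at least h (i.e., each containing points at distance arbitrarily close to at least h from b). -/

import Mathlib

open Set Metric

/-- A geodesic segment in a metric space: the image of an isometric embedding of a
closed real interval `[0, ℓ]`, going from `a` to `b`. -/
def IsGeodesicSegmentFromTo {M : Type*} [MetricSpace M] (s : Set M) (a b : M) : Prop :=
  ∃ ℓ : ℝ, 0 ≤ ℓ ∧ ∃ γ : ℝ → M,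
    (∀ u ∈ Set.Icc (0:ℝ) ℓ, ∀ v ∈ Set.Icc (0:ℝ) ℓ, dist (γ u) (γ v) = |u - v|) ∧
    γ 0 = a ∧ γ ℓ = b ∧ s = γ '' Set.Icc 0 ℓ

/-- An arc from `a` to `b`: the (injective, continuous) image of a closed real
interval `[0, ℓ]`; a single point when `a = b`. -/
def IsArcFromTo {M : Type*} [MetricSpace M] (s : Set M) (a b : M) : Prop :=
  ∃ ℓ : ℝ, 0 ≤ ℓ ∧ ∃ γ : ℝ → M,
    ContinuousOn γ (Set.Icc 0 ℓ) ∧ Set.InjOn γ (Set.Icc 0 ℓ) ∧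
    γ 0 = a ∧ γ ℓ = b ∧ s = γ '' Set.Icc 0 ℓ

/-- An ℝ-tree: a metric space in which any two points are joined by a unique arc,
and that arc is a geodesic segment. -/
def IsRTree (M : Type*) [MetricSpace M] : Prop :=
  ∀ a b : M, ∃ s : Set M,
    IsArcFromTo s a b ∧ IsGeodesicSegmentFromTo s a b ∧
    ∀ t : Set M, IsArcFromTo t a b → t = s

/-- The geodesic segment `[a, b]` in an ℝ-tree: the unique arc from `a` to `b`. -/
noncomputable def seg {M : Type*} [MetricSpace M] (h : IsRTree M) (a b : M) : Set M :=
  (h a b).choose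

/-- The branches at `a`: the connected components of `M ∖ {a}`. -/
def Branches {M : Type*} [MetricSpace M] (a : M) : Set (Set M) :=
  {β : Set M | ∃ x : M, x ≠ a ∧ β = connectedComponentIn (({a} : Set M)ᶜ) x}

/-- The branch `β` at `b` has height at least `h`:
`sup {d(b,x) : x ∈ β} ≥ h`, i.e. `β` contains points at distance arbitrarily
close to (at least) `h` from `b`. -/
def HeightGE {M : Type*} [MetricSpace M] (b : M) (β : Set M) (h : ℝ) : Prop :=
  ∀ h' : ℝ, h' < h → ∃ x ∈ β, h' < dist b x

/-- There are at least 3 branches at `b` of height ≥ `h`. -/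
def ThreeBranchesGE {M : Type*} [MetricSpace M] (b : M) (h : ℝ) : Prop :=
  ∃ β₁ β₂ β₃ : Set M, β₁ ∈ Branches b ∧ β₂ ∈ Branches b ∧ β₃ ∈ Branches b ∧
    β₁ ≠ β₂ ∧ β₁ ≠ β₃ ∧ β₂ ≠ β₃ ∧
    HeightGE b β₁ h ∧ HeightGE b β₂ h ∧ HeightGE b β₃ h

/-- A pointed ℝ-tree of radius ≤ `r` is richly branching if the set of points `b`
having at least 3 branches of height ≥ `r − d(p,b)` is dense. -/
def RichlyBranchingAt {M : Type*} [MetricSpace M] (p : M) (r : ℝ) : Prop :=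
  Dense {b : M | ThreeBranchesGE b (r - dist p b)}

/-- The branching condition for radius `r`: for every `x` and every `ε > 0` there
are `y₁, y₂, y₃` with `|d(x,yᵢ) − (r − d(p,x))| ≤ ε` and
`d(x,yᵢ) + d(x,yⱼ) − d(yᵢ,yⱼ) ≤ ε` for `i < j`. -/
def BranchingCondition {M : Type*} [MetricSpace M] (p : M) (r : ℝ) : Prop :=
  ∀ x : M, ∀ ε : ℝ, 0 < ε → ∃ y₁ y₂ y₃ : M,
    |dist x y₁ - (r - dist p x)| ≤ ε ∧
    |dist x y₂ - (r - dist p x)| ≤ ε ∧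
    |dist x y₃ - (r - dist p x)| ≤ ε ∧
    dist x y₁ + dist x y₂ - dist y₁ y₂ ≤ ε ∧
    dist x y₁ + dist x y₃ - dist y₁ y₃ ≤ ε ∧
    dist x y₂ + dist x y₃ - dist y₂ y₃ ≤ ε

/-! In an ℝ-tree, `x ∈ [a, b]` iff `d(a, x) + d(x, b) = d(a, b)`: if the equation holds,
`[a, x]` and `[x, b]` meet only at `x`, so their concatenation is an arc and by uniqueness it
is `[a, b]`. The same argument shows that the point of `[x, y] ∩ [y, z]` closest to `x` lies on
all three sides of the triangle `x y z`. A point `b ∈ [a, x]` other than `a` and `x` separates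
them: `{y | b ∈ [a, y]}` is closed, and open once `b` is removed.

Given `a`, the branching condition yields `y₁, y₂, y₃` at distance about `r − d(p, a)` from `a`
with Gromov products at `a` nearly zero. The center `m` of the tripod they span is then close
to `a` and far from each `yᵢ`, and the branches at `m` containing the `yᵢ` are distinct and
have height at least `h`. -/

section Arcs

variable {M : Type*} [MetricSpace M]

lemma IsArcFromTo.union {s t : Set M} {x m z : M} (hs : IsArcFromTo s x m)
    (ht : IsArcFromTo t m z) (hst : s ∩ t ⊆ {m}) : IsArcFromTo (s ∪ t) x z := by
  obtain ⟨ℓ₁, hℓ₁, α, hαc, hαi, rfl, hα₁, rfl⟩ := hs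
  obtain ⟨ℓ₂, hℓ₂, β, hβc, hβi, hβ₀, rfl, rfl⟩ := ht
  set γ : ℝ → M := fun u => if u ≤ ℓ₁ then α u else β (u - ℓ₁)
  have hγα : EqOn γ α (Icc 0 ℓ₁) := fun u hu => if_pos hu.2
  have hγβ : EqOn γ (β ∘ (· - ℓ₁)) (Icc ℓ₁ (ℓ₁ + ℓ₂)) := by
    intro u hu
    rcases hu.1.eq_or_lt with rfl | hlt
    · simp [γ, hα₁, hβ₀]
    · simp [γ, not_le.2 hlt]
  have hshift : MapsTo (· - ℓ₁) (Icc ℓ₁ (ℓ₁ + ℓ₂)) (Icc 0 ℓ₂) :=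
    fun u hu => ⟨by linarith [hu.1], by linarith [hu.2]⟩
  have hsplit : Icc 0 (ℓ₁ + ℓ₂) = Icc 0 ℓ₁ ∪ Icc ℓ₁ (ℓ₁ + ℓ₂) :=
    (Icc_union_Icc_eq_Icc hℓ₁ (by linarith)).symm
  have hjunction : ∀ u ∈ Icc 0 ℓ₁, ∀ v ∈ Icc ℓ₁ (ℓ₁ + ℓ₂), γ u = γ v → u = ℓ₁ ∧ v = ℓ₁ := by
    intro u hu v hv huv
    rw [hγα hu, hγβ hv] at huv
    have hαu : α u = m := hst ⟨mem_image_of_mem α hu, huv ▸ mem_image_of_mem β (hshift hv)⟩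
    refine ⟨hαi hu ⟨hℓ₁, le_rfl⟩ (hαu.trans hα₁.symm), ?_⟩
    have := hβi (hshift hv) ⟨le_rfl, hℓ₂⟩ (huv.symm.trans (hαu.trans hβ₀.symm))
    linarith
  refine ⟨ℓ₁ + ℓ₂, by positivity, γ, ?_, ?_, if_pos hℓ₁, ?_, ?_⟩
  · rw [hsplit]
    exact (hαc.congr hγα).union_of_isClosed
      ((hβc.comp (continuousOn_id.sub continuousOn_const) hshift).congr hγβ)
      isClosed_Icc isClosed_Icc
  · rw [hsplit]
    rintro u (hu | hu) v (hv | hv) huv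
    · exact hαi hu hv ((hγα hu).symm.trans (huv.trans (hγα hv)))
    · exact (hjunction u hu v hv huv).1.trans (hjunction u hu v hv huv).2.symm
    · exact (hjunction v hv u hu huv.symm).2.trans (hjunction v hv u hu huv.symm).1.symm
    · have := hβi (hshift hu) (hshift hv) ((hγβ hu).symm.trans (huv.trans (hγβ hv)))
      simpa using this
  · rw [hγβ ⟨by linarith, le_rfl⟩]
    simp
  · rw [hsplit, image_union, hγα.image_eq, hγβ.image_eq, image_comp, image_sub_const_Icc]
    simp

lemma IsArcFromTo.left_mem {s : Set M} {a b : M} (hs : IsArcFromTo s a b) : a ∈ s := by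
  obtain ⟨ℓ, hℓ, γ, -, -, rfl, -, rfl⟩ := hs
  exact mem_image_of_mem γ ⟨le_rfl, hℓ⟩

lemma IsArcFromTo.right_mem {s : Set M} {a b : M} (hs : IsArcFromTo s a b) : b ∈ s := by
  obtain ⟨ℓ, hℓ, γ, -, -, -, rfl, rfl⟩ := hs
  exact mem_image_of_mem γ ⟨hℓ, le_rfl⟩

lemma IsArcFromTo.isCompact {s : Set M} {a b : M} (hs : IsArcFromTo s a b) : IsCompact s := by
  obtain ⟨ℓ, -, γ, hγ, -, -, -, rfl⟩ := hs
  exact isCompact_Icc.image_of_continuousOn hγ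

lemma IsGeodesicSegmentFromTo.dist_eq_abs {s : Set M} {a b x y : M}
    (hs : IsGeodesicSegmentFromTo s a b) (hx : x ∈ s) (hy : y ∈ s) :
    dist x y = |dist a x - dist a y| := by
  obtain ⟨ℓ, hℓ, γ, hγ, rfl, -, rfl⟩ := hs
  obtain ⟨u, hu, rfl⟩ := hx
  obtain ⟨v, hv, rfl⟩ := hy
  have h₀ : (0 : ℝ) ∈ Icc 0 ℓ := ⟨le_rfl, hℓ⟩
  rw [hγ u hu v hv, hγ 0 h₀ u hu, hγ 0 h₀ v hv, zero_sub, zero_sub, abs_neg, abs_neg,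
    abs_of_nonneg hu.1, abs_of_nonneg hv.1]

lemma IsGeodesicSegmentFromTo.dist_add_dist {s : Set M} {a b x : M}
    (hs : IsGeodesicSegmentFromTo s a b) (hx : x ∈ s) : dist a x + dist x b = dist a b := by
  obtain ⟨ℓ, hℓ, γ, hγ, rfl, rfl, rfl⟩ := hs
  obtain ⟨u, hu, rfl⟩ := hx
  have h₀ : (0 : ℝ) ∈ Icc 0 ℓ := ⟨le_rfl, hℓ⟩
  have hℓ' : ℓ ∈ Icc 0 ℓ := ⟨hℓ, le_rfl⟩
  rw [hγ 0 h₀ u hu, hγ u hu ℓ hℓ', hγ 0 h₀ ℓ hℓ', abs_of_nonpos (by linarith [hu.1]),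
    abs_of_nonpos (by linarith [hu.2]), abs_of_nonpos (by linarith)]
  ring

end Arcs

section RTree

variable {M : Type*} [MetricSpace M] (hM : IsRTree M)

lemma isArcFromTo_seg (a b : M) : IsArcFromTo (seg hM a b) a b :=
  (hM a b).choose_spec.1

lemma isGeodesicSegmentFromTo_seg (a b : M) : IsGeodesicSegmentFromTo (seg hM a b) a b :=
  (hM a b).choose_spec.2.1

lemma eq_seg_of_isArcFromTo {s : Set M} {a b : M} (hs : IsArcFromTo s a b) : s = seg hM a b :=
  (hM a b).choose_spec.2.2 s hs

lemma mem_seg_of_inter_subset {a b x : M} (h : seg hM a x ∩ seg hM x b ⊆ {x}) :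
    x ∈ seg hM a b := by
  rw [← eq_seg_of_isArcFromTo hM ((isArcFromTo_seg hM a x).union (isArcFromTo_seg hM x b) h)]
  exact Or.inl (isArcFromTo_seg hM a x).right_mem

lemma mem_seg_iff {a b x : M} : x ∈ seg hM a b ↔ dist a x + dist x b = dist a b := by
  refine ⟨(isGeodesicSegmentFromTo_seg hM a b).dist_add_dist, fun h => ?_⟩
  refine mem_seg_of_inter_subset hM fun c ⟨hc₁, hc₂⟩ => ?_
  have h₁ := (isGeodesicSegmentFromTo_seg hM a x).dist_add_dist hc₁
  have h₂ := (isGeodesicSegmentFromTo_seg hM x b).dist_add_dist hc₂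
  exact dist_le_zero.1 (by linarith [dist_triangle a c b, dist_comm x c])

lemma seg_subset_seg_left {a b x : M} (hx : x ∈ seg hM a b) : seg hM a x ⊆ seg hM a b := by
  intro c hc
  rw [mem_seg_iff] at hx hc ⊢
  linarith [dist_triangle c x b, dist_triangle a c b]

lemma seg_subset_seg_right {a b x : M} (hx : x ∈ seg hM a b) : seg hM x b ⊆ seg hM a b := by
  intro c hc
  rw [mem_seg_iff] at hx hc ⊢
  linarith [dist_triangle a x c, dist_triangle a c b]

lemma eq_of_mem_seg_self {a x : M} (hx : x ∈ seg hM a a) : x = a := by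
  rw [mem_seg_iff, dist_self, dist_comm] at hx
  exact dist_le_zero.1 (by linarith [dist_nonneg (x := x) (y := a)])

lemma dist_eq_abs_of_mem_seg {a b x y : M} (hx : x ∈ seg hM a b) (hy : y ∈ seg hM a b) :
    dist x y = |dist a x - dist a y| :=
  (isGeodesicSegmentFromTo_seg hM a b).dist_eq_abs hx hy

lemma exists_mem_seg_inter (x y z : M) :
    ∃ m, m ∈ seg hM x y ∧ m ∈ seg hM y z ∧ m ∈ seg hM x z := by
  obtain ⟨m, ⟨hmxy, hmyz⟩, hmin⟩ :=
    ((isArcFromTo_seg hM x y).isCompact.inter (isArcFromTo_seg hM y z).isCompact).exists_isMinOn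
      ⟨y, (isArcFromTo_seg hM x y).right_mem, (isArcFromTo_seg hM y z).left_mem⟩
      (continuous_const.dist continuous_id).continuousOn
  refine ⟨m, hmxy, hmyz, mem_seg_of_inter_subset hM fun c ⟨hc₁, hc₂⟩ => ?_⟩
  have hxc : dist x m ≤ dist x c :=
    hmin ⟨seg_subset_seg_left hM hmxy hc₁, seg_subset_seg_right hM hmyz hc₂⟩
  rw [mem_seg_iff] at hc₁
  exact dist_le_zero.1 (by linarith)

lemma mem_seg_of_dist_lt {a b x x' : M} (hb : b ∈ seg hM a x) (hx' : dist x x' < dist b x) :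
    b ∈ seg hM a x' := by
  obtain ⟨m, hm₁, hm₂, hm₃⟩ := exists_mem_seg_inter hM a x' x
  have hbm := dist_eq_abs_of_mem_seg hM hb hm₃
  rw [mem_seg_iff] at hb hm₁ hm₂ hm₃ ⊢
  rcases le_or_gt (dist a b) (dist a m) with hle | hlt
  · rw [abs_of_nonpos (by linarith)] at hbm
    linarith [dist_triangle b m x', dist_triangle a b x']
  · linarith [dist_nonneg (x := x') (y := m), dist_comm x x']

lemma dist_le_of_mem_seg_of_gromov_le {a m y₁ y₂ y₃ : M} {δ : ℝ}
    (h₁₂ : m ∈ seg hM y₁ y₂) (h₁₃ : m ∈ seg hM y₁ y₃) (h₂₃ : m ∈ seg hM y₂ y₃)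
    (g₁₂ : dist a y₁ + dist a y₂ - dist y₁ y₂ ≤ δ)
    (g₁₃ : dist a y₁ + dist a y₃ - dist y₁ y₃ ≤ δ)
    (g₂₃ : dist a y₂ + dist a y₃ - dist y₂ y₃ ≤ δ) :
    dist a m ≤ δ := by
  -- `q`, the center of the tripod `a y₁ y₂`, lies within `δ / 2` of both `a` and `m`.
  obtain ⟨q, hq₁, hq₂, hq₃⟩ := exists_mem_seg_inter hM a y₁ y₂
  have hqm := dist_eq_abs_of_mem_seg hM hq₂ h₁₂
  rw [mem_seg_iff] at h₁₂ h₁₃ h₂₃ hq₁ hq₂ hq₃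
  have : dist q m ≤ δ / 2 := by
    rw [hqm, abs_le]
    constructor <;> linarith [dist_triangle_left y₁ y₃ a, dist_triangle_left y₂ y₃ a,
      dist_comm y₂ m, dist_comm y₁ q]
  linarith [dist_triangle a q m, dist_comm y₁ q]

end RTree

section Branches

variable {M : Type*} [MetricSpace M] (hM : IsRTree M)

lemma isOpen_setOf_mem_seg (a b : M) : IsOpen {x | x ≠ b ∧ b ∈ seg hM a x} := by
  refine Metric.isOpen_iff.2 fun x ⟨hxb, hb⟩ => ⟨dist b x, dist_pos.2 hxb.symm, fun y hy => ?_⟩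
  rw [mem_ball, dist_comm] at hy
  refine ⟨?_, mem_seg_of_dist_lt hM hb hy⟩
  rintro rfl
  exact (dist_comm x y).not_lt hy

lemma isClosed_setOf_mem_seg (a b : M) : IsClosed {x | b ∈ seg hM a x} := by
  simp_rw [mem_seg_iff hM]
  exact isClosed_eq (continuous_const.add (continuous_const.dist continuous_id))
    (continuous_const.dist continuous_id)

lemma connectedComponentIn_ne_of_mem_seg {a b x : M} (ha : a ≠ b) (hx : x ≠ b)
    (hb : b ∈ seg hM a x) :
    connectedComponentIn {b}ᶜ a ≠ connectedComponentIn {b}ᶜ x := by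
  intro heq
  have hsub : connectedComponentIn {b}ᶜ a ⊆ {y | b ∈ seg hM a y}ᶜ := by
    refine isPreconnected_connectedComponentIn.subset_left_of_subset_union
      (isClosed_setOf_mem_seg hM a b).isOpen_compl (isOpen_setOf_mem_seg hM a b)
      (disjoint_left.2 fun y hy₁ hy₂ => hy₁ hy₂.2) (fun y hy => ?_)
      ⟨a, mem_connectedComponentIn ha, fun h => ha (eq_of_mem_seg_self hM h).symm⟩
    have hyb : y ≠ b := connectedComponentIn_subset _ _ hy
    by_cases h : b ∈ seg hM a y
    · exact Or.inr ⟨hyb, h⟩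
    · exact Or.inl h
  exact hsub (heq ▸ mem_connectedComponentIn hx) hb

lemma threeBranchesGE_of_mem_seg {m y₁ y₂ y₃ : M} {h : ℝ} (hh : 0 < h)
    (h₁₂ : m ∈ seg hM y₁ y₂) (h₁₃ : m ∈ seg hM y₁ y₃) (h₂₃ : m ∈ seg hM y₂ y₃)
    (hy₁ : h ≤ dist m y₁) (hy₂ : h ≤ dist m y₂) (hy₃ : h ≤ dist m y₃) :
    ThreeBranchesGE m h := by
  have hne : ∀ {y}, h ≤ dist m y → y ≠ m := fun hy => by
    rintro rfl
    rw [dist_self] at hy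
    linarith
  have hheight : ∀ {y}, h ≤ dist m y → HeightGE m (connectedComponentIn {m}ᶜ y) h :=
    fun hy h' hh' => ⟨_, mem_connectedComponentIn (hne hy), hh'.trans_le hy⟩
  exact ⟨_, _, _, ⟨y₁, hne hy₁, rfl⟩, ⟨y₂, hne hy₂, rfl⟩, ⟨y₃, hne hy₃, rfl⟩,
    connectedComponentIn_ne_of_mem_seg hM (hne hy₁) (hne hy₂) h₁₂,
    connectedComponentIn_ne_of_mem_seg hM (hne hy₁) (hne hy₃) h₁₃,
    connectedComponentIn_ne_of_mem_seg hM (hne hy₂) (hne hy₃) h₂₃,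
    hheight hy₁, hheight hy₂, hheight hy₃⟩

end Branches

theorem statement_8_general {M : Type*} [MetricSpace M]
    (r : ℝ) (hM : IsRTree M) (p : M)
    (hbc : BranchingCondition p r)
    (a : M) (h : ℝ) (hh : 0 < h) (hh' : h < r - dist p a)
    (ε : ℝ) (hε : 0 < ε) :
    ∃ b : M, dist a b < ε ∧ ThreeBranchesGE b h := by
  set δ := min (ε / 3) ((r - dist p a - h) / 3)
  have hδε : δ < ε := (min_le_left _ _).trans_lt (by linarith)
  have hδh : 3 * δ ≤ r - dist p a - h := by
    linarith [min_le_right (ε / 3) ((r - dist p a - h) / 3)]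
  obtain ⟨y₁, y₂, y₃, h₁, h₂, h₃, g₁₂, g₁₃, g₂₃⟩ :=
    hbc a δ (lt_min (by linarith) (by linarith))
  rw [abs_le] at h₁ h₂ h₃
  obtain ⟨m, h₁₂, h₂₃, h₁₃⟩ := exists_mem_seg_inter hM y₁ y₂ y₃
  have e₁₂ := (mem_seg_iff hM).1 h₁₂
  have e₁₃ := (mem_seg_iff hM).1 h₁₃
  have e₂₃ := (mem_seg_iff hM).1 h₂₃
  -- `d(m, yᵢ)` is the Gromov product of the other two points at `yᵢ`, so `≥ d(a, yᵢ) - δ ≥ h`.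
  refine ⟨m, (dist_le_of_mem_seg_of_gromov_le hM h₁₂ h₁₃ h₂₃ g₁₂ g₁₃ g₂₃).trans_lt hδε,
    threeBranchesGE_of_mem_seg hM hh h₁₂ h₁₃ h₂₃ ?_ ?_ ?_⟩ <;>
  linarith [dist_triangle_left y₁ y₂ a, dist_triangle_left y₁ y₃ a, dist_triangle_left y₂ y₃ a,
    dist_comm m y₁, dist_comm m y₂, dist_comm m y₃]

/-- In a complete pointed ℝ-tree of radius ≤ `r` satisfying the
branching condition, for `a ∈ M`, `0 < h < r − d(p,a)` and `ε > 0` there is `b`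
with `d(a,b) < ε` having at least 3 branches of height at least `h`. -/
theorem statement_8 {M : Type*} [MetricSpace M] [CompleteSpace M]
    (r : ℝ) (hr : 0 < r) (hM : IsRTree M) (p : M)
    (hrad : ∀ x : M, dist p x ≤ r) (hbc : BranchingCondition p r)
    (a : M) (h : ℝ) (hh : 0 < h) (hh' : h < r - dist p a)
    (ε : ℝ) (hε : 0 < ε) :
    ∃ b : M, dist a b < ε ∧ ThreeBranchesGE b h :=
  statement_8_general r hM p hbc a h hh hh' ε hε
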